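/- Let G be a group generated by a finite set A, let H ≤ G be a subgroup, and let k ≥ 0. Then the language of all words w over A such that every prefix of w represents a group element within distance k of H (in the word metric on G) is a regular language. -/

import Mathlib

open Classical

/-- Evaluation in `G` of a word over the alphabet `A`. -/
def wordEval {G : Type} [Group G] {A : Type} (π : A → G) (w : List A) : G :=
  (w.map π).prod

/-- `π : A → G` generates `G` (positive words suffice; the generating set is
assumed symmetric, see `SymmetricGen`). -/
def Generates {G : Type} [Group G] {A : Type} (π : A → G) : Prop :=
  ∀ g : G, ∃ w : List A, wordEval π w = g

/-- The generating set is symmetric: `A = A⁻¹`. -/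
def SymmetricGen {G : Type} [Group G] {A : Type} (π : A → G) : Prop :=
  ∀ a : A, ∃ b : A, π b = (π a)⁻¹

/-- The word length of `g` with respect to the generating map `π`. -/
noncomputable def wordLength {G : Type} [Group G] {A : Type} (π : A → G) (g : G) : ℕ :=
  sInf {n : ℕ | ∃ w : List A, w.length = n ∧ wordEval π w = g}

/-- The word metric on `G` induced by the generating map `π`. -/
noncomputable def wordDist {G : Type} [Group G] {A : Type} (π : A → G) (g h : G) : ℕ :=
  wordLength π (g⁻¹ * h)

/-!
The distance condition on a prefix `u` says that the coset `(wordEval π u)⁻¹ H` meets the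
`k`-ball, and only finitely many cosets do. Reading a letter `a` moves this coset by `(π a)⁻¹`,
so the cosets form an automaton, infinite but with a finite set `S` of admissible states, and the
language consists of the words whose whole run stays in `S`. By Myhill–Nerode this is regular:
the left quotient by `x` is empty if the run of `x` has left `S`, and otherwise depends only on
the state reached, which lies in `S`.
-/

theorem List.forall_prefix_append_iff {α : Type*} {p : List α → Prop} {x y : List α} :
    (∀ u, u <+: x ++ y → p u) ↔ (∀ u, u <+: x → p u) ∧ ∀ v, v <+: y → p (x ++ v) := by
  refine ⟨fun h => ⟨fun u hu => h u (hu.trans (prefix_append x y)),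
    fun v hv => h _ ((prefix_append_right_inj x).2 hv)⟩, fun ⟨hx, hy⟩ u hu => ?_⟩
  rcases le_total u.length x.length with hle | hle
  · exact hx u ((isPrefix_append_of_length hle).1 hu)
  · obtain ⟨v, rfl⟩ := prefix_of_prefix_length_le (prefix_append x y) hu hle
    exact hy v ((prefix_append_right_inj x).1 hu)

theorem DFA.isRegular_setOf_forall_prefix_mem_accepts {α σ : Type*} (M : DFA α σ)
    (hM : M.accept.Finite) :
    Language.IsRegular ({w | ∀ u, u <+: w → u ∈ M.accepts} : Language α) := by
  set L : Language α := {w | ∀ u, u <+: w → u ∈ M.accepts}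
  have mem_leftQuotient (x v : List α) : v ∈ L.leftQuotient x ↔
      x ∈ L ∧ ∀ u, u <+: v → u ∈ M.acceptsFrom (M.eval x) := by
    simp only [← Language.leftQuotient_accepts_apply, Language.mem_leftQuotient]
    exact List.forall_prefix_append_iff
  refine .of_finite_range_leftQuotient <| ((hM.image fun q =>
    ({v | ∀ u, u <+: v → u ∈ M.acceptsFrom q} : Language α)).insert (0 : Language α)).subset ?_
  rintro _ ⟨x, rfl⟩
  by_cases hx : x ∈ L
  · exact Or.inr ⟨M.eval x, hx x (List.prefix_refl x),
      Set.ext fun v => ((mem_leftQuotient x v).trans (and_iff_right hx)).symm⟩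
  · exact Or.inl (Set.eq_empty_iff_forall_notMem.2 fun v h => hx ((mem_leftQuotient x v).1 h).1)

theorem QuotientGroup.mk_mem_image_mk_iff {G : Type*} [Group G] {H : Subgroup G} {T : Set G}
    {g : G} :
    (g : G ⧸ H) ∈ QuotientGroup.mk '' T ↔ ∃ h ∈ H, g * h ∈ T := by
  rw [← Set.mem_preimage, QuotientGroup.preimage_image_mk]
  simp

section WordMetric

variable {G : Type} [Group G] {A : Type} (π : A → G)

theorem wordEval_append (w v : List A) : wordEval π (w ++ v) = wordEval π w * wordEval π v := by
  simp [wordEval]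

theorem exists_length_eq_wordLength (hgen : Generates π) (g : G) :
    ∃ w : List A, w.length = wordLength π g ∧ wordEval π w = g := by
  obtain ⟨w, hw⟩ := hgen g
  exact Nat.sInf_mem (s := {n | ∃ w : List A, w.length = n ∧ wordEval π w = g})
    ⟨w.length, w, rfl, hw⟩

theorem finite_setOf_wordLength_le [Finite A] (hgen : Generates π) (k : ℕ) :
    {g : G | wordLength π g ≤ k}.Finite := by
  refine ((List.finite_length_le A k).image (wordEval π)).subset fun g hg => ?_
  obtain ⟨w, hw, rfl⟩ := exists_length_eq_wordLength π hgen g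
  exact ⟨w, hw.trans_le hg, rfl⟩

def cosetDFA (H : Subgroup G) (S : Set (G ⧸ H)) : DFA A (G ⧸ H) where
  step q a := (π a)⁻¹ • q
  start := ((1 : G) : G ⧸ H)
  accept := S

theorem cosetDFA_eval (H : Subgroup G) (S : Set (G ⧸ H)) (w : List A) :
    (cosetDFA π H S).eval w = ((wordEval π w)⁻¹ : G) := by
  induction w using List.reverseRecOn with
  | nil => simp [cosetDFA, wordEval]
  | append_singleton w a ih =>
    rw [DFA.eval_append_singleton, ih, wordEval_append]
    simp [cosetDFA, wordEval, MulAction.Quotient.smul_mk]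

end WordMetric

/-- The language of all words over `A` all of whose prefixes
represent group elements within distance `k` of the subgroup `H` is regular. -/
theorem regular_prefixes_near_subgroup {G : Type} [Group G] {A : Type} [Fintype A]
    (π : A → G) (hgen : Generates π) (H : Subgroup G) (k : ℕ) :
    Language.IsRegular ({w : List A | ∀ u : List A, u <+: w →
      ∃ h ∈ H, wordLength π ((wordEval π u)⁻¹ * h) ≤ k} : Language A) := by
  let S : Set (G ⧸ H) := QuotientGroup.mk '' {g | wordLength π g ≤ k}
  have hmem (u : List A) : u ∈ (cosetDFA π H S).accepts ↔
      ∃ h ∈ H, wordLength π ((wordEval π u)⁻¹ * h) ≤ k := by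
    rw [DFA.mem_accepts, cosetDFA_eval]
    exact QuotientGroup.mk_mem_image_mk_iff
  simpa only [hmem] using (cosetDFA π H S).isRegular_setOf_forall_prefix_mem_accepts
    ((finite_setOf_wordLength_le π hgen k).image _)
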